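/- arXiv:math/0605698 — 2 statements merged into one kernel-verified Lean document; each statement's English description precedes it below -/
import Mathlib

section
/- Let S be a semigroup and a ∈ S. The following are equivalent: (1) a^k is H-related to a^t for some k > t; (2) a^i is H-related to a^t for all i ≥ t; (3) the H-class of a^t is a group. -/
variable {S : Type*} [Semigroup S]

/-- Primary conjugacy: `a = x*y` and `b = y*x` for some `x, y`. -/
def PConj (a b : S) : Prop := ∃ x y : S, a = x * y ∧ b = y * x

/-- Conjugacy: the transitive closure of primary conjugacy. -/
def SConj : S → S → Prop := Relation.TransGen PConj

/-- `pw a n` is `a ^ n` for `n ≥ 1` (with junk value `a` at `n = 0`). -/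
def pw (a : S) : ℕ → S
  | 0 => a
  | 1 => a
  | n + 2 => pw a (n + 1) * a

/-- An element is a group element iff it lies in some subgroup of `S`:
there is an idempotent `e` acting as identity on `a`, and an inverse of `a`
relative to `e`. -/
def IsGroupElement (a : S) : Prop :=
  ∃ e b : S, e * e = e ∧ e * a = a ∧ a * e = a ∧ a * b = e ∧ b * a = e

/-- An element is group-bound if some positive power is a group element. -/
def GroupBound (a : S) : Prop := ∃ n : ℕ, 1 ≤ n ∧ IsGroupElement (pw a n)

/-- Green's L-relation: same principal left ideal in `S¹`. -/
def LRel (a b : S) : Prop :=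
  (∃ u : WithOne S, u * (a : WithOne S) = (b : WithOne S)) ∧
  (∃ u : WithOne S, u * (b : WithOne S) = (a : WithOne S))

/-- Green's R-relation: same principal right ideal in `S¹`. -/
def RRel (a b : S) : Prop :=
  (∃ u : WithOne S, (a : WithOne S) * u = (b : WithOne S)) ∧
  (∃ u : WithOne S, (b : WithOne S) * u = (a : WithOne S))

/-- Green's H-relation. -/
def HRel (a b : S) : Prop := LRel a b ∧ RRel a b

/-- Green's D-relation. -/
def DRel (a b : S) : Prop := ∃ c : S, LRel a c ∧ RRel c b

/-!
Pass to the monoid `S¹ = WithOne S`, where `pw a n` becomes `a ^ n` and the two halves of Green's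
`H`-relation become right and left divisibility. Since `a ^ t` divides every higher power, the
only content of `a ^ i H a ^ t` for `i ≥ t` is that `a ^ i` divides `a ^ t` on both sides. If
`a ^ (t + r) ∣ a ^ t` with `r ≥ 1`, multiplying on the left by powers of `a` climbs to
`a ^ (t + m * r) ∣ a ^ t` for every `m`, which gives (1) ⇒ (2). For (2) ⇔ (3), use the classical
criterion that the `H`-class of `x` is a group iff `x H x²`, applied to `x = a ^ t`.
-/

open MulOpposite

section Monoid

variable {M : Type*} [Monoid M]

theorem pow_add_mul_dvd_of_pow_add_dvd {a : M} {t r : ℕ} (h : a ^ (t + r) ∣ a ^ t) :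
    ∀ m : ℕ, a ^ (t + m * r) ∣ a ^ t
  | 0 => by simp
  | m + 1 => by
    have step : a ^ (m * r) * a ^ (t + r) ∣ a ^ (m * r) * a ^ t := mul_dvd_mul_left _ h
    rw [← pow_add, ← pow_add, show m * r + (t + r) = t + (m + 1) * r by ring,
      show m * r + t = t + m * r by ring] at step
    exact step.trans (pow_add_mul_dvd_of_pow_add_dvd h m)

theorem pow_dvd_of_pow_dvd_of_lt {a : M} {t k : ℕ} (hk : t < k) (h : a ^ k ∣ a ^ t) (i : ℕ) :
    a ^ i ∣ a ^ t := by
  obtain ⟨r, rfl⟩ := Nat.exists_eq_add_of_lt hk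
  have hclimb := pow_add_mul_dvd_of_pow_add_dvd (r := r + 1) (by simpa [add_assoc] using h) i
  exact (pow_dvd_pow a (by nlinarith)).trans hclimb

theorem pow_rightDvd_of_pow_rightDvd_of_lt {a : M} {t k : ℕ} (hk : t < k) (h : a ^ k ∣ᵣ a ^ t)
    (i : ℕ) : a ^ i ∣ᵣ a ^ t := by
  rw [rightDvd_iff_op_dvd_op, op_pow, op_pow] at h ⊢
  exact pow_dvd_of_pow_dvd_of_lt hk h i

end Monoid

theorem pw_succ (a : S) {n : ℕ} (hn : 1 ≤ n) : pw a (n + 1) = pw a n * a := by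
  obtain ⟨m, rfl⟩ := Nat.exists_eq_add_of_le' hn
  rfl

theorem coe_pw (a : S) {n : ℕ} (hn : 1 ≤ n) : ((pw a n : S) : WithOne S) = (a : WithOne S) ^ n := by
  induction n, hn using Nat.le_induction with
  | base => simp [pw]
  | succ n hn ih => rw [pw_succ a hn, WithOne.coe_mul, ih, pow_succ]

theorem pw_two_mul (a : S) {t : ℕ} (ht : 1 ≤ t) : pw a (2 * t) = pw a t * pw a t := by
  apply WithOne.coe_injective
  rw [WithOne.coe_mul, coe_pw a ht, coe_pw a (by omega), two_mul, pow_add]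

theorem lRel_iff_rightDvd {x y : S} :
    LRel x y ↔ (x : WithOne S) ∣ᵣ y ∧ (y : WithOne S) ∣ᵣ x := by
  simp only [LRel, RightDvd, eq_comm]

theorem rRel_iff_dvd {x y : S} : RRel x y ↔ (x : WithOne S) ∣ y ∧ (y : WithOne S) ∣ x := by
  simp only [RRel, Dvd.dvd, eq_comm]

theorem hRel_pw_iff {a : S} {t i : ℕ} (ht : 1 ≤ t) (hi : t ≤ i) :
    HRel (pw a i) (pw a t) ↔
      (a : WithOne S) ^ i ∣ᵣ (a : WithOne S) ^ t ∧ (a : WithOne S) ^ i ∣ (a : WithOne S) ^ t := by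
  have hti : (a : WithOne S) ^ t ∣ (a : WithOne S) ^ i := pow_dvd_pow _ hi
  have hti' : (a : WithOne S) ^ t ∣ᵣ (a : WithOne S) ^ i := ⟨_, (pow_sub_mul_pow _ hi).symm⟩
  simp only [HRel, lRel_iff_rightDvd, rRel_iff_dvd, coe_pw a ht, coe_pw a (ht.trans hi), hti,
    hti', and_true]

theorem exists_mul_mul_self_eq {x : S} (h : ∃ u : WithOne S, u * ↑(x * x) = x) :
    ∃ u : S, u * (x * x) = x := by
  obtain ⟨u, hu⟩ := h
  rcases eq_or_ne u 1 with rfl | hu1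
  · have hxx : x * x = x := WithOne.coe_injective (by simpa using hu)
    exact ⟨x, by rw [hxx, hxx]⟩
  · obtain ⟨u, rfl⟩ := WithOne.ne_one_iff_exists.mp hu1
    exact ⟨u, WithOne.coe_injective hu⟩

theorem exists_mul_self_mul_eq {x : S} (h : ∃ v : WithOne S, ↑(x * x) * v = x) :
    ∃ v : S, x * x * v = x := by
  obtain ⟨v, hv⟩ := h
  rcases eq_or_ne v 1 with rfl | hv1
  · have hxx : x * x = x := WithOne.coe_injective (by simpa using hv)
    exact ⟨x, by rw [hxx, hxx]⟩
  · obtain ⟨v, rfl⟩ := WithOne.ne_one_iff_exists.mp hv1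
    exact ⟨v, WithOne.coe_injective hv⟩

/-- The identity of the group is `e = x * v = u * x` and the inverse of `x` is `e * v`. -/
theorem isGroupElement_of_mul_mul_self {x u v : S} (hu : u * (x * x) = x) (hv : x * x * v = x) :
    IsGroupElement x := by
  have hvu : x * v = u * x := by
    calc x * v = u * (x * x) * v := by rw [hu]
      _ = u * x := by rw [mul_assoc, hv]
  have hex : x * v * x = x := by rw [hvu, mul_assoc, hu]
  have hxe : x * (x * v) = x := by rw [← mul_assoc, hv]
  refine ⟨x * v, x * v * v, ?_, hex, hxe, ?_, ?_⟩
  · rw [← mul_assoc, hex]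
  · rw [← mul_assoc, hxe]
  · nth_rewrite 1 [hvu]
    simp only [mul_assoc]
    rw [← mul_assoc x v x, hex, ← hvu]

theorem IsGroupElement.hRel_mul_self {x : S} (hx : IsGroupElement x) : HRel (x * x) x := by
  obtain ⟨e, b, -, hex, hxe, hxb, hbx⟩ := hx
  refine ⟨⟨⟨b, ?_⟩, ⟨x, rfl⟩⟩, ⟨⟨b, ?_⟩, ⟨x, rfl⟩⟩⟩
  · rw [← WithOne.coe_mul, ← mul_assoc, hbx, hex]
  · rw [← WithOne.coe_mul, mul_assoc, hxb, hxe]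

theorem isGroupElement_iff_hRel_mul_self (x : S) : IsGroupElement x ↔ HRel (x * x) x := by
  refine ⟨IsGroupElement.hRel_mul_self, ?_⟩
  rintro ⟨⟨hu, -⟩, hv, -⟩
  obtain ⟨u, hu⟩ := exists_mul_mul_self_eq hu
  obtain ⟨v, hv⟩ := exists_mul_self_mul_eq hv
  exact isGroupElement_of_mul_mul_self hu hv

theorem power_HRel_tfae (a : S) (t : ℕ) (ht : 1 ≤ t) :
    ((∃ k : ℕ, t < k ∧ HRel (pw a k) (pw a t)) ↔
      (∀ i : ℕ, t ≤ i → HRel (pw a i) (pw a t))) ∧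
    ((∀ i : ℕ, t ≤ i → HRel (pw a i) (pw a t)) ↔ IsGroupElement (pw a t)) := by
  have one_imp_two (h : ∃ k : ℕ, t < k ∧ HRel (pw a k) (pw a t)) (i : ℕ) (hi : t ≤ i) :
      HRel (pw a i) (pw a t) := by
    obtain ⟨k, hk, hkt⟩ := h
    rw [hRel_pw_iff ht hk.le] at hkt
    rw [hRel_pw_iff ht hi]
    exact ⟨pow_rightDvd_of_pow_rightDvd_of_lt hk hkt.1 i, pow_dvd_of_pow_dvd_of_lt hk hkt.2 i⟩
  have h2t : pw a (2 * t) = pw a t * pw a t := pw_two_mul a ht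
  refine ⟨⟨one_imp_two, fun h => ⟨t + 1, by omega, h _ (by omega)⟩⟩, ⟨fun h => ?_, fun h => ?_⟩⟩
  · rw [isGroupElement_iff_hRel_mul_self, ← h2t]
    exact h _ (by omega)
  · refine one_imp_two ⟨2 * t, by omega, ?_⟩
    rw [h2t]
    exact (isGroupElement_iff_hRel_mul_self _).mp h
end

section
/- Let S be a band (a semigroup of idempotents). Then for a, b ∈ S, a ∼ b if and only if a D b. -/
variable {S : Type*} [Semigroup S]

/-! In a band, `L`-related `a, c` satisfy `a = a * c` and `c = c * a`, and `R`-related ones satisfy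
`a = c * a` and `c = a * c`; so `L` and `R` lie inside primary conjugacy, and `D = L ∘ R` inside its
transitive closure. Conversely `x * y L y * x * y R y * x`, and `D` is transitive in every semigroup
because `R ∘ L ⊆ L ∘ R`. -/

lemma LRel.symm {a b : S} (h : LRel a b) : LRel b a := ⟨h.2, h.1⟩

lemma RRel.symm {a b : S} (h : RRel a b) : RRel b a := ⟨h.2, h.1⟩

lemma LRel.trans {a b c : S} (hab : LRel a b) (hbc : LRel b c) : LRel a c := by
  obtain ⟨⟨u, hu⟩, ⟨v, hv⟩⟩ := hab
  obtain ⟨⟨u', hu'⟩, ⟨v', hv'⟩⟩ := hbc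
  exact ⟨⟨u' * u, by rw [mul_assoc, hu, hu']⟩, ⟨v * v', by rw [mul_assoc, hv', hv]⟩⟩

lemma RRel.trans {a b c : S} (hab : RRel a b) (hbc : RRel b c) : RRel a c := by
  obtain ⟨⟨u, hu⟩, ⟨v, hv⟩⟩ := hab
  obtain ⟨⟨u', hu'⟩, ⟨v', hv'⟩⟩ := hbc
  exact ⟨⟨u * u', by rw [← mul_assoc, hu, hu']⟩, ⟨v' * v, by rw [← mul_assoc, hv', hv]⟩⟩

lemma lRel_of_mul_eq {a c u v : S} (hu : u * a = c) (hv : v * c = a) : LRel a c :=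
  ⟨⟨u, by rw [← WithOne.coe_mul, hu]⟩, ⟨v, by rw [← WithOne.coe_mul, hv]⟩⟩

lemma rRel_of_mul_eq {a c u v : S} (hu : a * u = c) (hv : c * v = a) : RRel a c :=
  ⟨⟨u, by rw [← WithOne.coe_mul, hu]⟩, ⟨v, by rw [← WithOne.coe_mul, hv]⟩⟩

lemma exists_coe_eq_mul_coe (u : WithOne S) (a : S) : ∃ d : S, (d : WithOne S) = u * a :=
  WithOne.cases_on u ⟨a, (one_mul _).symm⟩ fun u => ⟨u * a, WithOne.coe_mul u a⟩

lemma exists_lRel_rRel_of_rRel_lRel {a b c : S} (hac : RRel a c) (hcb : LRel c b) :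
    ∃ d : S, LRel a d ∧ RRel d b := by
  obtain ⟨⟨s, hs⟩, ⟨t, ht⟩⟩ := hac
  obtain ⟨⟨u, hu⟩, ⟨v, hv⟩⟩ := hcb
  obtain ⟨d, hd⟩ := exists_coe_eq_mul_coe u a
  refine ⟨d, ⟨⟨u, hd.symm⟩, ⟨v, ?_⟩⟩, ⟨⟨s, ?_⟩, ⟨t, ?_⟩⟩⟩
  · calc v * (d : WithOne S) = v * (u * (c * t)) := by rw [hd, ht]
      _ = v * b * t := by rw [← hu]; simp only [mul_assoc]
      _ = a := by rw [hv, ht]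
  · rw [hd, mul_assoc, hs, hu]
  · rw [← hu, hd, mul_assoc, ht]

lemma DRel.trans {a b c : S} (hab : DRel a b) (hbc : DRel b c) : DRel a c := by
  obtain ⟨d₁, had₁, hd₁b⟩ := hab
  obtain ⟨d₂, hbd₂, hd₂c⟩ := hbc
  obtain ⟨d, hd₁d, hdd₂⟩ := exists_lRel_rRel_of_rRel_lRel hd₁b hbd₂
  exact ⟨d, had₁.trans hd₁d, hdd₂.trans hd₂c⟩

instance : IsTrans S DRel := ⟨fun _ _ _ => DRel.trans⟩

lemma LRel.mul_eq_of_isIdempotentElem {a c : S} (ha : IsIdempotentElem a) (h : LRel a c) :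
    c * a = c := by
  obtain ⟨u, hu⟩ := h.1
  apply WithOne.coe_injective
  rw [WithOne.coe_mul, ← hu, mul_assoc, ← WithOne.coe_mul, ha.eq]

lemma RRel.mul_eq_of_isIdempotentElem {a c : S} (ha : IsIdempotentElem a) (h : RRel a c) :
    a * c = c := by
  obtain ⟨u, hu⟩ := h.1
  apply WithOne.coe_injective
  rw [WithOne.coe_mul, ← hu, ← mul_assoc, ← WithOne.coe_mul, ha.eq]

lemma LRel.pConj {a c : S} (ha : IsIdempotentElem a) (hc : IsIdempotentElem c) (h : LRel a c) :
    PConj a c :=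
  ⟨a, c, (h.symm.mul_eq_of_isIdempotentElem hc).symm,
    (h.mul_eq_of_isIdempotentElem ha).symm⟩

lemma RRel.pConj {a c : S} (ha : IsIdempotentElem a) (hc : IsIdempotentElem c) (h : RRel a c) :
    PConj a c :=
  ⟨c, a, (h.symm.mul_eq_of_isIdempotentElem hc).symm,
    (h.mul_eq_of_isIdempotentElem ha).symm⟩

lemma PConj.dRel {a b : S} (ha : IsIdempotentElem a) (hb : IsIdempotentElem b) (h : PConj a b) :
    DRel a b := by
  obtain ⟨x, y, rfl, rfl⟩ := h
  refine ⟨y * x * y, lRel_of_mul_eq (u := y) (v := x) (mul_assoc _ _ _).symm ?_,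
    rRel_of_mul_eq (u := x) (v := y) ?_ rfl⟩
  · calc x * (y * x * y) = x * y * (x * y) := by simp only [mul_assoc]
      _ = x * y := ha
  · calc y * x * y * x = y * x * (y * x) := by simp only [mul_assoc]
      _ = y * x := hb

theorem band_sconj_iff_dRel (hband : ∀ x : S, x * x = x) (a b : S) :
    SConj a b ↔ DRel a b := by
  constructor
  · exact Relation.transGen_minimal (fun x y => PConj.dRel (hband x) (hband y)) a b
  · rintro ⟨c, hac, hcb⟩
    exact .tail (.single (hac.pConj (hband a) (hband c))) (hcb.pConj (hband c) (hband b))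
end
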